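/- For every weighted digraph Γ and every real α ≠ 0, the matrix L + α·J̄ is nonsingular (in particular, L + J̄ is nonsingular). -/

import Mathlib

open Matrix BigOperators Filter

/-- An out forest of the weighted digraph with arc-weight matrix `ε`:
a set of arcs (pairs with positive weight), every vertex has at most one
incoming arc, and there is no directed cycle. -/
def IsOutForest {n : ℕ} (ε : Fin n → Fin n → ℝ) (F : Finset (Fin n × Fin n)) : Prop :=
  (∀ p ∈ F, 0 < ε p.1 p.2) ∧
  (∀ u u' v : Fin n, (u, v) ∈ F → (u', v) ∈ F → u = u') ∧
  ¬ ∃ (k : ℕ) (f : ℕ → Fin n), 0 < k ∧ f 0 = f k ∧ ∀ i < k, (f i, f (i + 1)) ∈ F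

/-- The weight of a forest: the product of the weights of its arcs. -/
noncomputable def forestWeight {n : ℕ} (ε : Fin n → Fin n → ℝ)
    (F : Finset (Fin n × Fin n)) : ℝ :=
  ∏ p ∈ F, ε p.1 p.2

/-- `σ_k`: the total weight of the out forests with exactly `k` arcs. -/
noncomputable def sigmaW {n : ℕ} (ε : Fin n → Fin n → ℝ) (k : ℕ) : ℝ :=
  ∑ᶠ F ∈ {F : Finset (Fin n × Fin n) | IsOutForest ε F ∧ F.card = k}, forestWeight ε F

/-- `Q_k`: the matrix whose `(i,j)` entry is the total weight of out forests with `k`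
arcs in which `j` has no incoming arc and `i` is reachable from `j` along arcs of `F`. -/
noncomputable def QMat {n : ℕ} (ε : Fin n → Fin n → ℝ) (k : ℕ) :
    Matrix (Fin n) (Fin n) ℝ :=
  Matrix.of fun i j =>
    ∑ᶠ F ∈ {F : Finset (Fin n × Fin n) | IsOutForest ε F ∧ F.card = k ∧
        (∀ u, (u, j) ∉ F) ∧ Relation.ReflTransGen (fun a b => (a, b) ∈ F) j i},
      forestWeight ε F

/-- `n − v`: the maximum number of arcs in an out forest. -/
noncomputable def maxForestCard {n : ℕ} (ε : Fin n → Fin n → ℝ) : ℕ :=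
  sSup {k | ∃ F : Finset (Fin n × Fin n), IsOutForest ε F ∧ F.card = k}

/-- The Kirchhoff matrix: `l i j = -ε j i` for `j ≠ i`, `l i i = Σ_{k ≠ i} ε k i`. -/
noncomputable def kirchhoff {n : ℕ} (ε : Fin n → Fin n → ℝ) : Matrix (Fin n) (Fin n) ℝ :=
  Matrix.of fun i j =>
    if i = j then ∑ k ∈ Finset.univ.filter (· ≠ i), ε k i else -(ε j i)

/-- The normalized matrix of maximum out forests `J̄ = σ_{n−v}⁻¹ Q_{n−v}`. -/
noncomputable def Jbar {n : ℕ} (ε : Fin n → Fin n → ℝ) : Matrix (Fin n) (Fin n) ℝ :=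
  (sigmaW ε (maxForestCard ε))⁻¹ • QMat ε (maxForestCard ε)

section Reach

variable {n : ℕ}

/-- Reachability along arcs of `F`. -/
def Reach (F : Finset (Fin n × Fin n)) : Fin n → Fin n → Prop :=
  Relation.ReflTransGen fun a b => (a, b) ∈ F

lemma reach_refl {F : Finset (Fin n × Fin n)} {a : Fin n} : Reach F a a :=
  Relation.ReflTransGen.refl

lemma reach_mono {F G : Finset (Fin n × Fin n)} (h : F ⊆ G) {a b : Fin n}
    (hr : Reach F a b) : Reach G a b :=
  Relation.ReflTransGen.mono (fun _ _ hxy => h hxy) _ _ hr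

lemma reach_exists_path {F : Finset (Fin n × Fin n)} {a b : Fin n} (h : Reach F a b) :
    ∃ (k : ℕ) (f : ℕ → Fin n), f 0 = a ∧ f k = b ∧ ∀ i < k, (f i, f (i + 1)) ∈ F := by
  induction h with
  | refl => exact ⟨0, fun _ => a, rfl, rfl, by omega⟩
  | @tail c d h1 h2 ih =>
    obtain ⟨k, f, h0, hk, hstep⟩ := ih
    refine ⟨k + 1, fun i => if i ≤ k then f i else d, by simp [h0], by simp, ?_⟩
    intro i hi
    rcases lt_or_eq_of_le (Nat.lt_succ_iff.mp hi) with hi' | hi'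
    · simpa [Nat.le_of_lt hi', Nat.succ_le_of_lt hi'] using hstep i hi'
    · subst hi'; simpa [hk] using h2

lemma IsOutForest.no_cycle {ε : Fin n → Fin n → ℝ} {F : Finset (Fin n × Fin n)}
    (hF : IsOutForest ε F) {a b : Fin n} (hr : Reach F a b) (hab : (b, a) ∈ F) : False := by
  obtain ⟨k, f, h0, hk, hstep⟩ := reach_exists_path hr
  refine hF.2.2 ⟨k + 1, fun i => if i ≤ k then f i else a, by omega, by simp [h0], ?_⟩
  intro i hi
  rcases lt_or_eq_of_le (Nat.lt_succ_iff.mp hi) with hi' | hi'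
  · simpa [Nat.le_of_lt hi', Nat.succ_le_of_lt hi'] using hstep i hi'
  · subst hi'; simpa [hk] using hab

lemma no_cycle_of_acyclic {F : Finset (Fin n × Fin n)}
    (h : ∀ a b : Fin n, Reach F a b → (b, a) ∈ F → False) :
    ¬ ∃ (k : ℕ) (f : ℕ → Fin n), 0 < k ∧ f 0 = f k ∧ ∀ i < k, (f i, f (i + 1)) ∈ F := by
  rintro ⟨k, f, hk, hf, hstep⟩
  have key : ∀ m, m ≤ k - 1 → Reach F (f 0) (f m) := by
    intro m
    induction m with
    | zero => intro _; exact reach_refl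
    | succ m ih =>
      intro hm
      exact (ih (by omega)).tail (hstep m (by omega))
  have harc : (f (k - 1), f 0) ∈ F := by
    have := hstep (k - 1) (by omega)
    rwa [show k - 1 + 1 = k by omega, ← hf] at this
  exact h _ _ (key (k - 1) le_rfl) harc

/-- Master lemma: any reach decomposes as one avoiding a designated arc `(q,i)`,
or a pair of such reaches through the arc. -/
lemma reach_erase_or {F : Finset (Fin n × Fin n)} (q i : Fin n) {a b : Fin n}
    (h : Reach F a b) :
    Reach (F.erase (q, i)) a b ∨
      (Reach (F.erase (q, i)) a q ∧ Reach (F.erase (q, i)) i b) := by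
  induction h with
  | refl => exact Or.inl reach_refl
  | @tail c d h1 harc ih =>
    by_cases he : (c, d) = (q, i)
    · simp only [Prod.mk.injEq] at he
      obtain ⟨rfl, rfl⟩ := he
      rcases ih with h | ⟨h1', _⟩
      · exact Or.inr ⟨h, reach_refl⟩
      · exact Or.inr ⟨h1', reach_refl⟩
    · have harc' : (c, d) ∈ F.erase (q, i) := Finset.mem_erase.mpr ⟨he, harc⟩
      rcases ih with h | ⟨h1', h2'⟩
      · exact Or.inl (h.tail harc')
      · exact Or.inr ⟨h1', h2'.tail harc'⟩

/-- In a graph with unique in-arcs, two vertices reaching a common vertex are comparable. -/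
lemma reach_total {F : Finset (Fin n × Fin n)}
    (hU : ∀ u u' v : Fin n, (u, v) ∈ F → (u', v) ∈ F → u = u') {a b c : Fin n}
    (hac : Reach F a c) : Reach F b c → Reach F a b ∨ Reach F b a := by
  induction hac with
  | refl => exact fun hbc => Or.inr hbc
  | @tail d e h1 harc ih =>
    intro hbc
    rcases Relation.ReflTransGen.cases_tail hbc with rfl | ⟨d', hbd', harc'⟩
    · exact Or.inl (h1.tail harc)
    · have : d' = d := hU d' d e harc' harc
      subst this
      exact ih hbd'

lemma reach_last_arc {ε : Fin n → Fin n → ℝ} {F : Finset (Fin n × Fin n)}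
    (hF : IsOutForest ε F) {j i : Fin n} (hr : Reach F j i) (hne : j ≠ i) :
    ∃ q, (q, i) ∈ F ∧ Reach (F.erase (q, i)) j q := by
  rcases Relation.ReflTransGen.cases_tail hr with rfl | ⟨q, hjq, hqi⟩
  · exact absurd rfl hne
  · refine ⟨q, hqi, ?_⟩
    rcases reach_erase_or q i hjq with h | ⟨_, h2⟩
    · exact h
    · exact absurd hqi (fun harc => hF.no_cycle (reach_mono (Finset.erase_subset _ _) h2) harc)

lemma IsOutForest.subset {ε : Fin n → Fin n → ℝ} {F F' : Finset (Fin n × Fin n)}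
    (hF : IsOutForest ε F) (h : F' ⊆ F) : IsOutForest ε F' := by
  refine ⟨fun p hp => hF.1 p (h hp), fun u u' v hu hu' => hF.2.1 u u' v (h hu) (h hu'), ?_⟩
  rintro ⟨k, f, hk, hf, hstep⟩
  exact hF.2.2 ⟨k, f, hk, hf, fun i hi => h (hstep i hi)⟩

lemma IsOutForest.arc_ne {ε : Fin n → Fin n → ℝ} (hd : ∀ i, ε i i = 0)
    {F : Finset (Fin n × Fin n)} (hF : IsOutForest ε F) {a b : Fin n}
    (h : (a, b) ∈ F) : a ≠ b := by
  intro hab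
  have := hF.1 _ h
  rw [hab] at this
  simp [hd b] at this

lemma IsOutForest.insertArc {ε : Fin n → Fin n → ℝ} (hd : ∀ i, ε i i = 0)
    {F : Finset (Fin n × Fin n)} (hF : IsOutForest ε F) {p i : Fin n}
    (hpi : 0 < ε p i) (hroot : ∀ u, (u, i) ∉ F) (hnr : ¬ Reach F i p) :
    IsOutForest ε (insert (p, i) F) := by
  have hpiF : (p, i) ∉ F := hroot p
  have herase : (insert (p, i) F).erase (p, i) = F := Finset.erase_insert hpiF
  refine ⟨?_, ?_, ?_⟩
  · intro x hx
    rcases Finset.mem_insert.mp hx with rfl | hx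
    · exact hpi
    · exact hF.1 x hx
  · intro u u' v hu hu'
    rcases Finset.mem_insert.mp hu with hu | hu
    · rcases Finset.mem_insert.mp hu' with hu' | hu'
      · simp only [Prod.mk.injEq] at hu hu'
        omega
      · simp only [Prod.mk.injEq] at hu
        exact absurd hu' (hu.2 ▸ hroot u')
    · rcases Finset.mem_insert.mp hu' with hu' | hu'
      · simp only [Prod.mk.injEq] at hu'
        exact absurd hu (hu'.2 ▸ hroot u)
      · exact hF.2.1 u u' v hu hu'
  · apply no_cycle_of_acyclic
    intro a b hr harc
    rcases Finset.mem_insert.mp harc with he | harc'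
    · simp only [Prod.mk.injEq] at he
      obtain ⟨rfl, rfl⟩ := he
      rcases reach_erase_or b a hr with h | ⟨h1, _⟩
      · exact hnr (herase ▸ h)
      · exact hnr (herase ▸ h1)
    · rcases reach_erase_or p i hr with h | ⟨h1, h2⟩
      · exact hF.no_cycle (herase ▸ h) harc'
      · have h1' : Reach F a p := herase ▸ h1
        have h2' : Reach F i b := herase ▸ h2
        exact hnr ((h2'.tail harc').trans h1')

end Reach

open scoped Classical

noncomputable section

variable {n : ℕ}

def forestsC (ε : Fin n → Fin n → ℝ) (k : ℕ) : Finset (Finset (Fin n × Fin n)) :=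
  Finset.univ.filter fun F => IsOutForest ε F ∧ F.card = k

def qsetC (ε : Fin n → Fin n → ℝ) (k : ℕ) (i j : Fin n) : Finset (Finset (Fin n × Fin n)) :=
  Finset.univ.filter fun F => IsOutForest ε F ∧ F.card = k ∧ (∀ u, (u, j) ∉ F) ∧ Reach F j i

lemma sigmaW_eq (ε : Fin n → Fin n → ℝ) (k : ℕ) :
    sigmaW ε k = ∑ F ∈ forestsC ε k, forestWeight ε F := by
  rw [sigmaW, ← finsum_mem_coe_finset]
  congr 1
  ext F
  simp [forestsC]

lemma qmatlike_eq (ε : Fin n → Fin n → ℝ) (k : ℕ) (i j : Fin n) :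
    (∑ᶠ F ∈ {F : Finset (Fin n × Fin n) | IsOutForest ε F ∧ F.card = k ∧
        (∀ u, (u, j) ∉ F) ∧ Relation.ReflTransGen (fun a b => (a, b) ∈ F) j i},
      forestWeight ε F) = ∑ F ∈ qsetC ε k i j, forestWeight ε F := by
  rw [← finsum_mem_coe_finset]
  congr 1
  ext F
  simp [qsetC]
  rfl

/-- A chosen in-arc tail for vertex `i` in `F`. -/
def inArc (F : Finset (Fin n × Fin n)) (i : Fin n) : Fin n :=
  if h : ∃ q, (q, i) ∈ F then h.choose else i

lemma inArc_mem {F : Finset (Fin n × Fin n)} {i : Fin n} (h : ∃ q, (q, i) ∈ F) :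
    (inArc F i, i) ∈ F := by
  rw [inArc, dif_pos h]
  exact h.choose_spec

lemma inArc_eq {ε : Fin n → Fin n → ℝ} {F : Finset (Fin n × Fin n)}
    (hF : IsOutForest ε F) {q i : Fin n} (h : (q, i) ∈ F) : inArc F i = q :=
  hF.2.1 _ _ _ (inArc_mem ⟨q, h⟩) h

lemma forestWeight_pos {ε : Fin n → Fin n → ℝ} {F : Finset (Fin n × Fin n)}
    (hF : IsOutForest ε F) : 0 < forestWeight ε F :=
  Finset.prod_pos fun p hp => hF.1 p hp

lemma forestWeight_insert {ε : Fin n → Fin n → ℝ} {F : Finset (Fin n × Fin n)}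
    {p i : Fin n} (h : (p, i) ∉ F) :
    forestWeight ε (insert (p, i) F) = ε p i * forestWeight ε F :=
  Finset.prod_insert h

lemma forestWeight_erase {ε : Fin n → Fin n → ℝ} {F : Finset (Fin n × Fin n)}
    {q i : Fin n} (h : (q, i) ∈ F) :
    forestWeight ε F = ε q i * forestWeight ε (F.erase (q, i)) :=
  (Finset.mul_prod_erase F _ h).symm

lemma empty_forest (ε : Fin n → Fin n → ℝ) : IsOutForest ε (∅ : Finset (Fin n × Fin n)) := by
  refine ⟨by simp, by simp, ?_⟩
  rintro ⟨k, f, hk, -, hstep⟩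
  exact absurd (hstep 0 hk) (by simp)

lemma reach_empty {i j : Fin n} (h : Reach (∅ : Finset (Fin n × Fin n)) j i) : j = i := by
  rcases Relation.ReflTransGen.cases_head h with h | ⟨c, hc, -⟩
  · exact h
  · simp at hc

lemma maxForestCard_spec (ε : Fin n → Fin n → ℝ) :
    (∃ F : Finset (Fin n × Fin n), IsOutForest ε F ∧ F.card = maxForestCard ε) ∧
      (∀ F : Finset (Fin n × Fin n), IsOutForest ε F → F.card ≤ maxForestCard ε) := by
  have hbdd : BddAbove {k | ∃ F : Finset (Fin n × Fin n), IsOutForest ε F ∧ F.card = k} := by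
    refine ⟨Fintype.card (Fin n × Fin n), ?_⟩
    rintro k ⟨F, -, rfl⟩
    exact F.card_le_univ.trans (le_of_eq (Finset.card_univ))
  have hne : {k | ∃ F : Finset (Fin n × Fin n), IsOutForest ε F ∧ F.card = k}.Nonempty :=
    ⟨0, ∅, empty_forest ε, Finset.card_empty⟩
  constructor
  · exact Nat.sSup_mem hne hbdd
  · intro F hF
    exact le_csSup hbdd ⟨F, hF, rfl⟩

end



noncomputable section
variable {n : ℕ}

lemma QMat_apply (ε : Fin n → Fin n → ℝ) (k : ℕ) (i j : Fin n) :
    QMat ε k i j = ∑ F ∈ qsetC ε k i j, forestWeight ε F :=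
  qmatlike_eq ε k i j

lemma forestsC_zero (ε : Fin n → Fin n → ℝ) :
    forestsC ε 0 = ({∅} : Finset (Finset (Fin n × Fin n))) := by
  ext F
  simp only [forestsC, Finset.mem_filter, Finset.mem_univ, true_and, Finset.mem_singleton,
    Finset.card_eq_zero]
  constructor
  · rintro ⟨-, rfl⟩; rfl
  · rintro rfl; exact ⟨empty_forest ε, rfl⟩

lemma sigmaW_zero (ε : Fin n → Fin n → ℝ) : sigmaW ε 0 = 1 := by
  rw [sigmaW_eq, forestsC_zero]
  simp [forestWeight]

lemma qsetC_zero (ε : Fin n → Fin n → ℝ) (i j : Fin n) :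
    qsetC ε 0 i j = if i = j then ({∅} : Finset (Finset (Fin n × Fin n))) else ∅ := by
  ext F
  simp only [qsetC, Finset.mem_filter, Finset.mem_univ, true_and, Finset.card_eq_zero]
  split
  · next h =>
    subst h
    simp only [Finset.mem_singleton]
    constructor
    · rintro ⟨-, rfl, -⟩; rfl
    · rintro rfl
      exact ⟨empty_forest ε, rfl, by simp, reach_refl⟩
  · next h =>
    simp only [Finset.notMem_empty, iff_false]
    rintro ⟨-, rfl, -, hr⟩
    exact h (reach_empty hr).symm

lemma QMat_zero (ε : Fin n → Fin n → ℝ) : QMat ε 0 = (1 : Matrix (Fin n) (Fin n) ℝ) := by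
  ext i j
  rw [QMat_apply, qsetC_zero, Matrix.one_apply]
  split <;> simp [forestWeight]

lemma forestsC_eq_empty {ε : Fin n → Fin n → ℝ} {k : ℕ} (h : maxForestCard ε < k) :
    forestsC ε k = ∅ := by
  ext F
  simp only [forestsC, Finset.mem_filter, Finset.mem_univ, true_and, Finset.notMem_empty,
    iff_false]
  rintro ⟨hF, rfl⟩
  exact absurd ((maxForestCard_spec ε).2 F hF) (not_le.mpr h)

lemma sigmaW_eq_zero {ε : Fin n → Fin n → ℝ} {k : ℕ} (h : maxForestCard ε < k) :
    sigmaW ε k = 0 := by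
  rw [sigmaW_eq, forestsC_eq_empty h, Finset.sum_empty]

lemma QMat_eq_zero {ε : Fin n → Fin n → ℝ} {k : ℕ} (h : maxForestCard ε < k) :
    QMat ε k = 0 := by
  ext i j
  rw [QMat_apply]
  have : qsetC ε k i j = ∅ := by
    ext F
    simp only [qsetC, Finset.mem_filter, Finset.mem_univ, true_and, Finset.notMem_empty,
      iff_false]
    rintro ⟨hF, rfl, -⟩
    exact absurd ((maxForestCard_spec ε).2 F hF) (not_le.mpr h)
  simp [this]

lemma sigmaW_max_pos (ε : Fin n → Fin n → ℝ) : 0 < sigmaW ε (maxForestCard ε) := by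
  rw [sigmaW_eq]
  obtain ⟨F, hF, hcard⟩ := (maxForestCard_spec ε).1
  refine Finset.sum_pos' ?_ ⟨F, ?_, ?_⟩
  · intro G hG
    have hG' : IsOutForest ε G := (Finset.mem_filter.mp hG).2.1
    exact (forestWeight_pos hG').le
  · simp [forestsC, hF, hcard]
  · exact forestWeight_pos hF

/-- Vertices `p ≠ i` with a positive arc weight into `i`. -/
def tailsC (ε : Fin n → Fin n → ℝ) (i : Fin n) : Finset (Fin n) :=
  Finset.univ.filter fun p => p ≠ i ∧ 0 < ε p i

lemma sum_restrict_tails {ε : Fin n → Fin n → ℝ} (hnn : ∀ a b, 0 ≤ ε a b) (i : Fin n)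
    (X : Fin n → ℝ) :
    ∑ p ∈ Finset.univ.filter (· ≠ i), ε p i * X p = ∑ p ∈ tailsC ε i, ε p i * X p := by
  refine (Finset.sum_subset ?_ ?_).symm
  · intro p hp
    simp only [tailsC, Finset.mem_filter, Finset.mem_univ, true_and] at hp ⊢
    exact hp.1
  · intro p hp hnp
    simp only [tailsC, Finset.mem_filter, Finset.mem_univ, true_and] at hp hnp
    have : ε p i = 0 := le_antisymm (by
      by_contra h
      exact hnp ⟨hp, lt_of_le_of_ne (hnn p i) (fun h' => h (h' ▸ le_refl 0))⟩) (hnn p i)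
    simp [this]

/-- Pairs `(p, F)` with `p` a positive tail into `i` and `P p F`. -/
def pairSet (ε : Fin n → Fin n → ℝ) (i : Fin n)
    (P : Fin n → Finset (Fin n × Fin n) → Prop) :
    Finset (Fin n × Finset (Fin n × Fin n)) :=
  Finset.univ.filter fun x => (x.1 ≠ i ∧ 0 < ε x.1 i) ∧ P x.1 x.2

lemma pairSet_sum (ε : Fin n → Fin n → ℝ) (i : Fin n)
    (P : Fin n → Finset (Fin n × Fin n) → Prop)
    (w : Fin n × Finset (Fin n × Fin n) → ℝ) :
    ∑ x ∈ pairSet ε i P, w x =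
      ∑ p ∈ tailsC ε i, ∑ F ∈ Finset.univ.filter (P p), w (p, F) := by
  refine Finset.sum_finset_product _ _ _ ?_
  intro x
  simp only [pairSet, tailsC, Finset.mem_filter, Finset.mem_univ, true_and]

lemma mem_pairSet {ε : Fin n → Fin n → ℝ} {i : Fin n}
    {P : Fin n → Finset (Fin n × Fin n) → Prop} {x : Fin n × Finset (Fin n × Fin n)} :
    x ∈ pairSet ε i P ↔ (x.1 ≠ i ∧ 0 < ε x.1 i) ∧ P x.1 x.2 := by
  simp [pairSet]

lemma mem_qsetC {ε : Fin n → Fin n → ℝ} {k : ℕ} {i j : Fin n}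
    {F : Finset (Fin n × Fin n)} :
    F ∈ qsetC ε k i j ↔
      IsOutForest ε F ∧ F.card = k ∧ (∀ u, (u, j) ∉ F) ∧ Reach F j i := by
  simp [qsetC]

end

noncomputable section Bijections
variable {n : ℕ} {ε : Fin n → Fin n → ℝ}

lemma root_erase {F : Finset (Fin n × Fin n)} (hF : IsOutForest ε F) {q i : Fin n}
    (hqi : (q, i) ∈ F) : ∀ u, (u, i) ∉ F.erase (q, i) := by
  intro u hu
  have h1 : (u, i) ∈ F := Finset.mem_of_mem_erase hu
  have h2 : u = q := hF.2.1 u q i h1 hqi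
  subst h2
  exact (Finset.mem_erase.mp hu).1 rfl

lemma pairSet_split (ε : Fin n → Fin n → ℝ) (i : Fin n)
    (P G : Fin n → Finset (Fin n × Fin n) → Prop)
    (w : Fin n × Finset (Fin n × Fin n) → ℝ) :
    ∑ x ∈ pairSet ε i P, w x =
      ∑ x ∈ pairSet ε i (fun p F => P p F ∧ G p F), w x +
      ∑ x ∈ pairSet ε i (fun p F => P p F ∧ ¬ G p F), w x := by
  rw [← Finset.sum_filter_add_sum_filter_not (pairSet ε i P) (fun x => G x.1 x.2)]
  congr 1
  · apply Finset.sum_congr _ fun _ _ => rfl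
    ext x
    simp only [Finset.mem_filter, pairSet, Finset.mem_univ, true_and]
    tauto
  · apply Finset.sum_congr _ fun _ _ => rfl
    ext x
    simp only [Finset.mem_filter, pairSet, Finset.mem_univ, true_and]
    tauto

/-- Bijection 1: good pairs `(p, F)` correspond to `(k+1)`-forests counted in `Q_{k+1} i j`. -/
lemma bij_insert (hd : ∀ a, ε a a = 0) {k : ℕ} {i j : Fin n} (hij : i ≠ j) :
    ∑ x ∈ pairSet ε i (fun p F =>
        (IsOutForest ε F ∧ F.card = k ∧ (∀ u, (u, j) ∉ F) ∧ Reach F j p) ∧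
        ((∀ u, (u, i) ∉ F) ∧ ¬ Reach F i p)),
      ε x.1 i * forestWeight ε x.2 =
    ∑ F ∈ qsetC ε (k + 1) i j, forestWeight ε F := by
  refine Finset.sum_nbij' (fun x => insert (x.1, i) x.2)
    (fun F => (inArc F i, F.erase (inArc F i, i))) ?_ ?_ ?_ ?_ ?_
  · rintro ⟨p, F⟩ hx
    obtain ⟨⟨hpne, hpi⟩, ⟨hF, hcard, hrootj, hreach⟩, hrooti, hnr⟩ := mem_pairSet.mp hx
    have hpiF : (p, i) ∉ F := hrooti p
    have hF' : IsOutForest ε (insert (p, i) F) := hF.insertArc hd hpi hrooti hnr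
    refine mem_qsetC.mpr ⟨hF', ?_, ?_, ?_⟩
    · rw [Finset.card_insert_of_notMem hpiF, hcard]
    · intro u hu
      rcases Finset.mem_insert.mp hu with he | hu'
      · simp only [Prod.mk.injEq] at he
        exact hij he.2.symm
      · exact hrootj u hu'
    · exact (reach_mono (Finset.subset_insert _ _) hreach).tail (Finset.mem_insert_self _ _)
  · intro F' hmem
    obtain ⟨hF', hcard, hrootj, hreach⟩ := mem_qsetC.mp hmem
    have hex : ∃ q, (q, i) ∈ F' := by
      rcases Relation.ReflTransGen.cases_tail hreach with h | ⟨c, -, hc⟩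
      · exact absurd h hij
      · exact ⟨c, hc⟩
    have hqF : (inArc F' i, i) ∈ F' := inArc_mem hex
    have hqne : inArc F' i ≠ i := hF'.arc_ne hd hqF
    refine mem_pairSet.mpr ⟨⟨hqne, hF'.1 _ hqF⟩,
      ⟨hF'.subset (Finset.erase_subset _ _), ?_, ?_, ?_⟩, root_erase hF' hqF, ?_⟩
    · rw [Finset.card_erase_of_mem hqF, hcard]
      omega
    · intro u hu
      exact hrootj u (Finset.mem_of_mem_erase hu)
    · dsimp only
      obtain ⟨q', hq'F, hr'⟩ := reach_last_arc hF' hreach (Ne.symm hij)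
      have heq : inArc F' i = q' := inArc_eq hF' hq'F
      rw [heq]
      exact hr'
    · intro h
      exact hF'.no_cycle (reach_mono (Finset.erase_subset _ _) h) hqF
  · rintro ⟨p, F⟩ hx
    obtain ⟨⟨hpne, hpi⟩, ⟨hF, hcard, hrootj, hreach⟩, hrooti, hnr⟩ := mem_pairSet.mp hx
    have hpiF : (p, i) ∉ F := hrooti p
    have hF' : IsOutForest ε (insert (p, i) F) := hF.insertArc hd hpi hrooti hnr
    have h1 : inArc (insert (p, i) F) i = p :=
      inArc_eq hF' (Finset.mem_insert_self _ _)
    simp only [h1, Finset.erase_insert hpiF]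
  · intro F' hmem
    obtain ⟨hF', hcard, hrootj, hreach⟩ := mem_qsetC.mp hmem
    have hex : ∃ q, (q, i) ∈ F' := by
      rcases Relation.ReflTransGen.cases_tail hreach with h | ⟨c, -, hc⟩
      · exact absurd h hij
      · exact ⟨c, hc⟩
    exact Finset.insert_erase (inArc_mem hex)
  · rintro ⟨p, F⟩ hx
    obtain ⟨⟨hpne, hpi⟩, ⟨hF, hcard, hrootj, hreach⟩, hrooti, hnr⟩ := mem_pairSet.mp hx
    exact (forestWeight_insert (hrooti p)).symm

/-- Core facts about swapping the in-arc of `i` from `(q,i)` to `(p,i)`. -/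
lemma swap_core (hd : ∀ a, ε a a = 0) {F : Finset (Fin n × Fin n)}
    (hF : IsOutForest ε F) {q i p : Fin n} (hqi : (q, i) ∈ F) (hpi : 0 < ε p i)
    (hnr : ¬ Reach F i p) :
    (p, i) ∉ F.erase (q, i) ∧
    IsOutForest ε (insert (p, i) (F.erase (q, i))) ∧
    (insert (p, i) (F.erase (q, i))).card = F.card ∧
    inArc (insert (p, i) (F.erase (q, i))) i = p ∧
    insert (q, i) ((insert (p, i) (F.erase (q, i))).erase (p, i)) = F ∧
    ¬ Reach (insert (p, i) (F.erase (q, i))) i q ∧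
    ε p i * forestWeight ε F = ε q i * forestWeight ε (insert (p, i) (F.erase (q, i))) := by
  set E := F.erase (q, i) with hE
  have hpE : (p, i) ∉ E := root_erase hF hqi p
  have hEF : E ⊆ F := Finset.erase_subset _ _
  have hFE : IsOutForest ε E := hF.subset hEF
  have hF'' : IsOutForest ε (insert (p, i) E) :=
    hFE.insertArc hd hpi (root_erase hF hqi) (fun h => hnr (reach_mono hEF h))
  have hcard : (insert (p, i) E).card = F.card := by
    rw [Finset.card_insert_of_notMem hpE, hE, Finset.card_erase_of_mem hqi]
    have : 0 < F.card := Finset.card_pos.mpr ⟨_, hqi⟩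
    omega
  have hinarc : inArc (insert (p, i) E) i = p := inArc_eq hF'' (Finset.mem_insert_self _ _)
  have hback : insert (q, i) ((insert (p, i) E).erase (p, i)) = F := by
    rw [Finset.erase_insert hpE, hE, Finset.insert_erase hqi]
  have hnoreach : ¬ Reach (insert (p, i) E) i q := by
    intro h
    have herase : (insert (p, i) E).erase (p, i) = E := Finset.erase_insert hpE
    rcases reach_erase_or p i h with h' | ⟨h1, -⟩
    · rw [herase] at h'
      exact hF.no_cycle (reach_mono hEF h') hqi
    · rw [herase] at h1
      exact hnr (reach_mono hEF h1)
  have hwt : ε p i * forestWeight ε F = ε q i * forestWeight ε (insert (p, i) E) := by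
    rw [forestWeight_insert hpE, forestWeight_erase (ε := ε) hqi]
    ring
  exact ⟨hpE, hF'', hcard, hinarc, hback, hnoreach, hwt⟩

/-- Bijection 2: bad pairs `(p, F)` (with `j ⟶* p`) correspond to pairs with `j ⟶* i`. -/
lemma bij_swap (hd : ∀ a, ε a a = 0) {k : ℕ} {i j : Fin n} (hij : i ≠ j) :
    ∑ x ∈ pairSet ε i (fun p F =>
        (IsOutForest ε F ∧ F.card = k ∧ (∀ u, (u, j) ∉ F) ∧ Reach F j p) ∧
        ¬((∀ u, (u, i) ∉ F) ∧ ¬ Reach F i p)),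
      ε x.1 i * forestWeight ε x.2 =
    ∑ x ∈ pairSet ε i (fun p F =>
        IsOutForest ε F ∧ F.card = k ∧ (∀ u, (u, j) ∉ F) ∧ Reach F j i),
      ε x.1 i * forestWeight ε x.2 := by
  classical
  set φ : Fin n × Finset (Fin n × Fin n) → Fin n × Finset (Fin n × Fin n) :=
    fun x => if Reach x.2 i x.1 then x
      else (inArc x.2 i, insert (x.1, i) (x.2.erase (inArc x.2 i, i))) with hφ
  refine Finset.sum_nbij' φ φ ?_ ?_ ?_ ?_ ?_
  · -- maps bad pairs to target pairs
    rintro ⟨p, F⟩ hx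
    obtain ⟨⟨hpne, hpi⟩, ⟨hF, hcard, hrootj, hreach⟩, hbad⟩ := mem_pairSet.mp hx
    by_cases hr : Reach F i p
    · rw [hφ]; simp only [if_pos hr]
      refine mem_pairSet.mpr ⟨⟨hpne, hpi⟩, hF, hcard, hrootj, ?_⟩
      rcases reach_total hF.2.1 hreach hr with h | h
      · exact h
      · rcases Relation.ReflTransGen.cases_tail h with he | ⟨c, -, hc⟩
        · exact absurd he (Ne.symm hij)
        · exact absurd hc (hrootj c)
    · rw [hφ]; simp only [if_neg hr]
      have hex : ∃ q, (q, i) ∈ F := by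
        by_contra hno
        push_neg at hno
        exact hbad ⟨hno, hr⟩
      have hqF : (inArc F i, i) ∈ F := inArc_mem hex
      obtain ⟨hpE, hF'', hcard'', hinarc, hback, hnoreach, hwt⟩ :=
        swap_core hd hF hqF hpi hr
      refine mem_pairSet.mpr ⟨⟨hF.arc_ne hd hqF, hF.1 _ hqF⟩, hF'', by rw [hcard'', hcard], ?_, ?_⟩
      · intro u hu
        rcases Finset.mem_insert.mp hu with he | hu'
        · simp only [Prod.mk.injEq] at he
          exact hij he.2.symm
        · exact hrootj u (Finset.mem_of_mem_erase hu')
      · -- Reach F'' j i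
        rcases reach_erase_or (inArc F i) i hreach with h' | ⟨-, h2⟩
        · exact (reach_mono (Finset.subset_insert _ _) h').tail (Finset.mem_insert_self _ _)
        · exact absurd (reach_mono (Finset.erase_subset _ _) h2) hr
  · -- maps target pairs to bad pairs
    rintro ⟨p, F⟩ hx
    obtain ⟨⟨hpne, hpi⟩, hF, hcard, hrootj, hreach⟩ := mem_pairSet.mp hx
    by_cases hr : Reach F i p
    · rw [hφ]; simp only [if_pos hr]
      refine mem_pairSet.mpr ⟨⟨hpne, hpi⟩, ⟨hF, hcard, hrootj, hreach.trans hr⟩, ?_⟩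
      rintro ⟨-, hn⟩
      exact hn hr
    · rw [hφ]; simp only [if_neg hr]
      have hex : ∃ q, (q, i) ∈ F := by
        rcases Relation.ReflTransGen.cases_tail hreach with h | ⟨c, -, hc⟩
        · exact absurd h hij
        · exact ⟨c, hc⟩
      have hqF : (inArc F i, i) ∈ F := inArc_mem hex
      obtain ⟨hpE, hF'', hcard'', hinarc, hback, hnoreach, hwt⟩ :=
        swap_core hd hF hqF hpi hr
      refine mem_pairSet.mpr ⟨⟨hF.arc_ne hd hqF, hF.1 _ hqF⟩,
        ⟨hF'', by rw [hcard'', hcard], ?_, ?_⟩, ?_⟩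
      · intro u hu
        rcases Finset.mem_insert.mp hu with he | hu'
        · simp only [Prod.mk.injEq] at he
          exact hij he.2.symm
        · exact hrootj u (Finset.mem_of_mem_erase hu')
      · -- Reach F'' j (inArc F i)
        obtain ⟨q', hq'F, hr'⟩ := reach_last_arc hF hreach (Ne.symm hij)
        have heq : inArc F i = q' := inArc_eq hF hq'F
        rw [heq]
        exact reach_mono (Finset.subset_insert _ _) (heq ▸ hr')
      · rintro ⟨hrooti, -⟩
        exact hrooti p (Finset.mem_insert_self _ _)
  · -- left inverse
    rintro ⟨p, F⟩ hx
    obtain ⟨⟨hpne, hpi⟩, ⟨hF, hcard, hrootj, hreach⟩, hbad⟩ := mem_pairSet.mp hx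
    by_cases hr : Reach F i p
    · rw [hφ]; simp only [if_pos hr, if_pos hr]
    · have hex : ∃ q, (q, i) ∈ F := by
        by_contra hno
        push_neg at hno
        exact hbad ⟨hno, hr⟩
      have hqF : (inArc F i, i) ∈ F := inArc_mem hex
      obtain ⟨hpE, hF'', hcard'', hinarc, hback, hnoreach, hwt⟩ :=
        swap_core hd hF hqF hpi hr
      rw [hφ]
      simp only [if_neg hr]
      simp only [if_neg hnoreach]
      simp only [hinarc, hback]
  · -- right inverse
    rintro ⟨p, F⟩ hx
    obtain ⟨⟨hpne, hpi⟩, hF, hcard, hrootj, hreach⟩ := mem_pairSet.mp hx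
    by_cases hr : Reach F i p
    · rw [hφ]; simp only [if_pos hr, if_pos hr]
    · have hex : ∃ q, (q, i) ∈ F := by
        rcases Relation.ReflTransGen.cases_tail hreach with h | ⟨c, -, hc⟩
        · exact absurd h hij
        · exact ⟨c, hc⟩
      have hqF : (inArc F i, i) ∈ F := inArc_mem hex
      obtain ⟨hpE, hF'', hcard'', hinarc, hback, hnoreach, hwt⟩ :=
        swap_core hd hF hqF hpi hr
      rw [hφ]
      simp only [if_neg hr]
      simp only [if_neg hnoreach]
      simp only [hinarc, hback]
  · -- weights
    rintro ⟨p, F⟩ hx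
    obtain ⟨⟨hpne, hpi⟩, ⟨hF, hcard, hrootj, hreach⟩, hbad⟩ := mem_pairSet.mp hx
    by_cases hr : Reach F i p
    · rw [hφ]; simp only [if_pos hr]
    · have hex : ∃ q, (q, i) ∈ F := by
        by_contra hno
        push_neg at hno
        exact hbad ⟨hno, hr⟩
      have hqF : (inArc F i, i) ∈ F := inArc_mem hex
      obtain ⟨hpE, hF'', hcard'', hinarc, hback, hnoreach, hwt⟩ :=
        swap_core hd hF hqF hpi hr
      rw [hφ]
      simp only [if_neg hr]
      exact hwt

/-- Bijection 3: non-rooted `(k+1)`-forests correspond to pairs `(p, F)` with `¬ j ⟶* p`. -/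
lemma bij_noroot (hd : ∀ a, ε a a = 0) {k : ℕ} {j : Fin n} :
    ∑ F ∈ (forestsC ε (k + 1)).filter (fun F => ¬ ∀ u, (u, j) ∉ F), forestWeight ε F =
    ∑ x ∈ pairSet ε j (fun p F =>
        IsOutForest ε F ∧ F.card = k ∧ (∀ u, (u, j) ∉ F) ∧ ¬ Reach F j p),
      ε x.1 j * forestWeight ε x.2 := by
  classical
  refine Finset.sum_nbij' (fun F => (inArc F j, F.erase (inArc F j, j)))
    (fun x => insert (x.1, j) x.2) ?_ ?_ ?_ ?_ ?_
  · intro F' hmem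
    simp only [Finset.mem_filter, forestsC, Finset.mem_univ, true_and] at hmem
    obtain ⟨⟨hF', hcard⟩, hnroot⟩ := hmem
    push_neg at hnroot
    obtain ⟨u, hu⟩ := hnroot
    have hex : ∃ q, (q, j) ∈ F' := ⟨u, hu⟩
    have hqF : (inArc F' j, j) ∈ F' := inArc_mem hex
    refine mem_pairSet.mpr ⟨⟨hF'.arc_ne hd hqF, hF'.1 _ hqF⟩,
      hF'.subset (Finset.erase_subset _ _), ?_, root_erase hF' hqF, ?_⟩
    · rw [Finset.card_erase_of_mem hqF, hcard]
      omega
    · intro h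
      exact hF'.no_cycle (reach_mono (Finset.erase_subset _ _) h) hqF
  · rintro ⟨p, F⟩ hx
    obtain ⟨⟨hpne, hpj⟩, hF, hcard, hrootj, hnr⟩ := mem_pairSet.mp hx
    have hF' : IsOutForest ε (insert (p, j) F) := hF.insertArc hd hpj hrootj hnr
    simp only [Finset.mem_filter, forestsC, Finset.mem_univ, true_and]
    refine ⟨⟨hF', ?_⟩, ?_⟩
    · rw [Finset.card_insert_of_notMem (hrootj p), hcard]
    · push_neg
      exact ⟨p, Finset.mem_insert_self _ _⟩
  · intro F' hmem
    simp only [Finset.mem_filter, forestsC, Finset.mem_univ, true_and] at hmem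
    obtain ⟨⟨hF', hcard⟩, hnroot⟩ := hmem
    push_neg at hnroot
    obtain ⟨u, hu⟩ := hnroot
    exact Finset.insert_erase (inArc_mem ⟨u, hu⟩)
  · rintro ⟨p, F⟩ hx
    obtain ⟨⟨hpne, hpj⟩, hF, hcard, hrootj, hnr⟩ := mem_pairSet.mp hx
    have hF' : IsOutForest ε (insert (p, j) F) := hF.insertArc hd hpj hrootj hnr
    have h1 : inArc (insert (p, j) F) j = p := inArc_eq hF' (Finset.mem_insert_self _ _)
    simp only [h1, Finset.erase_insert (hrootj p)]
  · intro F' hmem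
    simp only [Finset.mem_filter, forestsC, Finset.mem_univ, true_and] at hmem
    obtain ⟨⟨hF', hcard⟩, hnroot⟩ := hmem
    push_neg at hnroot
    obtain ⟨u, hu⟩ := hnroot
    exact forestWeight_erase (inArc_mem ⟨u, hu⟩)

end Bijections


noncomputable section KeyIdentity
variable {n : ℕ} {ε : Fin n → Fin n → ℝ}

lemma C1 (hd : ∀ a, ε a a = 0) {k : ℕ} {i j : Fin n} (hij : i ≠ j) :
    ∑ p ∈ tailsC ε i, ε p i * QMat ε k p j =
      QMat ε (k + 1) i j + ∑ p ∈ tailsC ε i, ε p i * QMat ε k i j := by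
  have base : ∑ p ∈ tailsC ε i, ε p i * QMat ε k p j =
      ∑ x ∈ pairSet ε i (fun p F =>
          IsOutForest ε F ∧ F.card = k ∧ (∀ u, (u, j) ∉ F) ∧ Reach F j p),
        ε x.1 i * forestWeight ε x.2 := by
    rw [pairSet_sum]
    refine Finset.sum_congr rfl fun p _ => ?_
    rw [QMat_apply, Finset.mul_sum]
    apply Finset.sum_congr _ fun _ _ => rfl
    ext F
    simp [qsetC]
  have base2 : ∑ p ∈ tailsC ε i, ε p i * QMat ε k i j =
      ∑ x ∈ pairSet ε i (fun p F =>
          IsOutForest ε F ∧ F.card = k ∧ (∀ u, (u, j) ∉ F) ∧ Reach F j i),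
        ε x.1 i * forestWeight ε x.2 := by
    rw [pairSet_sum]
    refine Finset.sum_congr rfl fun p _ => ?_
    rw [QMat_apply, Finset.mul_sum]
    apply Finset.sum_congr _ fun _ _ => rfl
    ext F
    simp [qsetC]
  rw [base, base2,
    pairSet_split ε i _ (fun p F => (∀ u, (u, i) ∉ F) ∧ ¬ Reach F i p) _]
  beta_reduce
  rw [bij_insert hd hij, bij_swap hd hij, QMat_apply]

lemma C2 (hd : ∀ a, ε a a = 0) {k : ℕ} (j : Fin n) :
    sigmaW ε (k + 1) + ∑ p ∈ tailsC ε j, ε p j * QMat ε k p j =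
      QMat ε (k + 1) j j + ∑ p ∈ tailsC ε j, ε p j * QMat ε k j j := by
  have hroot : (forestsC ε (k + 1)).filter (fun F => ∀ u, (u, j) ∉ F) =
      qsetC ε (k + 1) j j := by
    ext F
    simp only [Finset.mem_filter, forestsC, qsetC, Finset.mem_univ, true_and]
    constructor
    · rintro ⟨⟨h1, h2⟩, h3⟩
      exact ⟨h1, h2, h3, reach_refl⟩
    · rintro ⟨h1, h2, h3, -⟩
      exact ⟨⟨h1, h2⟩, h3⟩
  have hsigma : sigmaW ε (k + 1) =
      QMat ε (k + 1) j j +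
        ∑ x ∈ pairSet ε j (fun p F =>
            IsOutForest ε F ∧ F.card = k ∧ (∀ u, (u, j) ∉ F) ∧ ¬ Reach F j p),
          ε x.1 j * forestWeight ε x.2 := by
    rw [sigmaW_eq,
      ← Finset.sum_filter_add_sum_filter_not (forestsC ε (k + 1)) (fun F => ∀ u, (u, j) ∉ F),
      hroot, ← QMat_apply, bij_noroot hd]
  have hdiff : ∑ x ∈ pairSet ε j (fun p F =>
        IsOutForest ε F ∧ F.card = k ∧ (∀ u, (u, j) ∉ F) ∧ ¬ Reach F j p),
      ε x.1 j * forestWeight ε x.2 =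
      ∑ p ∈ tailsC ε j, (ε p j * QMat ε k j j - ε p j * QMat ε k p j) := by
    rw [pairSet_sum]
    refine Finset.sum_congr rfl fun p _ => ?_
    have hsub : qsetC ε k p j ⊆ qsetC ε k j j := by
      intro F hF
      simp only [qsetC, Finset.mem_filter, Finset.mem_univ, true_and] at hF ⊢
      exact ⟨hF.1, hF.2.1, hF.2.2.1, reach_refl⟩
    dsimp only
    rw [← Finset.mul_sum, QMat_apply, QMat_apply, ← mul_sub, ← Finset.sum_sdiff_eq_sub hsub]
    congr 1
    refine Finset.sum_congr ?_ fun _ _ => rfl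
    ext F
    simp only [Finset.mem_filter, Finset.mem_univ, true_and, Finset.mem_sdiff, qsetC]
    constructor
    · rintro ⟨h1, h2, h3, h4⟩
      exact ⟨⟨h1, h2, h3, reach_refl⟩, fun hc => h4 hc.2.2.2⟩
    · rintro ⟨⟨h1, h2, h3, -⟩, h4⟩
      exact ⟨h1, h2, h3, fun hr => h4 ⟨h1, h2, h3, hr⟩⟩
  rw [hsigma, hdiff, Finset.sum_sub_distrib]
  ring

lemma keyA_entry (hnn : ∀ a b, 0 ≤ ε a b) (hd : ∀ a, ε a a = 0) (k : ℕ) (i j : Fin n) :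
    QMat ε (k + 1) i j + ∑ p, kirchhoff ε i p * QMat ε k p j =
      sigmaW ε (k + 1) * (if i = j then 1 else 0) := by
  have hsplit : ∑ p, kirchhoff ε i p * QMat ε k p j =
      kirchhoff ε i i * QMat ε k i j +
        ∑ p ∈ Finset.univ.filter (· ≠ i), kirchhoff ε i p * QMat ε k p j := by
    rw [show (Finset.univ.filter (· ≠ i)) = Finset.univ.erase i from Finset.filter_ne' _ _]
    exact (Finset.add_sum_erase _ _ (Finset.mem_univ i)).symm
  have hdiagk : kirchhoff ε i i = ∑ q ∈ Finset.univ.filter (· ≠ i), ε q i := by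
    simp [kirchhoff]
  have hoff : ∀ p ∈ Finset.univ.filter (· ≠ i),
      kirchhoff ε i p * QMat ε k p j = -(ε p i * QMat ε k p j) := by
    intro p hp
    simp only [Finset.mem_filter, Finset.mem_univ, true_and] at hp
    have : kirchhoff ε i p = -(ε p i) := by
      simp [kirchhoff, (Ne.symm hp : i ≠ p)]
    rw [this]
    ring
  have h2 : ∑ p ∈ Finset.univ.filter (· ≠ i), kirchhoff ε i p * QMat ε k p j =
      -∑ p ∈ Finset.univ.filter (· ≠ i), ε p i * QMat ε k p j := by
    rw [Finset.sum_congr rfl hoff, Finset.sum_neg_distrib]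
  have h3 : (∑ q ∈ Finset.univ.filter (· ≠ i), ε q i) * QMat ε k i j =
      ∑ q ∈ Finset.univ.filter (· ≠ i), ε q i * QMat ε k i j := Finset.sum_mul _ _ _
  rw [hsplit, hdiagk, h2, h3, sum_restrict_tails hnn i (fun p => QMat ε k p j),
    sum_restrict_tails hnn i (fun _ => QMat ε k i j)]
  by_cases hij : i = j
  · subst hij
    rw [if_pos rfl, mul_one]
    have := C2 (ε := ε) hd (k := k) i
    linarith
  · rw [if_neg hij, mul_zero]
    have := C1 (ε := ε) hd (k := k) hij
    linarith

lemma keyA (hnn : ∀ a b, 0 ≤ ε a b) (hd : ∀ a, ε a a = 0) (k : ℕ) :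
    QMat ε (k + 1) + kirchhoff ε * QMat ε k =
      sigmaW ε (k + 1) • (1 : Matrix (Fin n) (Fin n) ℝ) := by
  ext i j
  rw [Matrix.add_apply, Matrix.mul_apply, Matrix.smul_apply, Matrix.one_apply, smul_eq_mul]
  exact keyA_entry hnn hd k i j

end KeyIdentity


noncomputable section Algebra
variable {n : ℕ} {ε : Fin n → Fin n → ℝ}

lemma Q_succ (hnn : ∀ a b, 0 ≤ ε a b) (hd : ∀ a, ε a a = 0) (k : ℕ) :
    QMat ε (k + 1) =
      sigmaW ε (k + 1) • (1 : Matrix (Fin n) (Fin n) ℝ) - kirchhoff ε * QMat ε k :=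
  eq_sub_of_add_eq (keyA hnn hd k)

lemma kirchhoff_comm (hnn : ∀ a b, 0 ≤ ε a b) (hd : ∀ a, ε a a = 0) (k : ℕ) :
    kirchhoff ε * QMat ε k = QMat ε k * kirchhoff ε := by
  induction k with
  | zero => rw [QMat_zero, Matrix.mul_one, Matrix.one_mul]
  | succ k ih =>
    rw [Q_succ hnn hd k, Matrix.mul_sub, Matrix.sub_mul, mul_smul_comm, smul_mul_assoc,
      one_mul, mul_one, Matrix.mul_assoc, ← ih, ← Matrix.mul_assoc]

lemma L_mul_Qmax (hnn : ∀ a b, 0 ≤ ε a b) (hd : ∀ a, ε a a = 0) :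
    kirchhoff ε * QMat ε (maxForestCard ε) = 0 := by
  have h := keyA (ε := ε) hnn hd (maxForestCard ε)
  rw [QMat_eq_zero (lt_add_one _), sigmaW_eq_zero (lt_add_one _), zero_add, zero_smul] at h
  exact h

lemma Qmax_mul_L (hnn : ∀ a b, 0 ≤ ε a b) (hd : ∀ a, ε a a = 0) :
    QMat ε (maxForestCard ε) * kirchhoff ε = 0 := by
  rw [← kirchhoff_comm hnn hd]
  exact L_mul_Qmax hnn hd

lemma Qmax_idem (hnn : ∀ a b, 0 ≤ ε a b) (hd : ∀ a, ε a a = 0) :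
    QMat ε (maxForestCard ε) * QMat ε (maxForestCard ε) =
      sigmaW ε (maxForestCard ε) • QMat ε (maxForestCard ε) := by
  have key : ∀ k, QMat ε k * QMat ε (maxForestCard ε) =
      sigmaW ε k • QMat ε (maxForestCard ε) := by
    intro k
    induction k with
    | zero => rw [QMat_zero, Matrix.one_mul, sigmaW_zero, one_smul]
    | succ k ih =>
      rw [Q_succ hnn hd k, Matrix.sub_mul, smul_mul_assoc, Matrix.one_mul,
        Matrix.mul_assoc, ih, mul_smul_comm, L_mul_Qmax hnn hd, smul_zero, sub_zero]
  exact key _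

lemma Qmax_fix (hnn : ∀ a b, 0 ≤ ε a b) (hd : ∀ a, ε a a = 0) {x : Fin n → ℝ}
    (hx : kirchhoff ε *ᵥ x = 0) :
    QMat ε (maxForestCard ε) *ᵥ x = sigmaW ε (maxForestCard ε) • x := by
  have key : ∀ k, QMat ε k *ᵥ x = sigmaW ε k • x := by
    intro k
    induction k with
    | zero => rw [QMat_zero, Matrix.one_mulVec, sigmaW_zero, one_smul]
    | succ k ih =>
      rw [Q_succ hnn hd k, Matrix.sub_mulVec, Matrix.smul_mulVec, Matrix.one_mulVec,
        ← Matrix.mulVec_mulVec, ih, Matrix.mulVec_smul, hx, smul_zero, sub_zero]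
  exact key _

end Algebra


/-- for every `α ≠ 0` the matrix `L + α·J̄` is nonsingular
(in particular, `L + J̄` is nonsingular). -/
theorem kirchhoff_add_smul_Jbar_isUnit (n : ℕ) (hn : 1 < n) (ε : Fin n → Fin n → ℝ)
    (hnonneg : ∀ i j, 0 ≤ ε i j) (hdiag : ∀ i, ε i i = 0) :
    (∀ α : ℝ, α ≠ 0 → IsUnit (kirchhoff ε + α • Jbar ε)) ∧
    IsUnit (kirchhoff ε + Jbar ε) := by
  have main : ∀ α : ℝ, α ≠ 0 → IsUnit (kirchhoff ε + α • Jbar ε) := by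
    intro α hα
    have hσ : 0 < sigmaW ε (maxForestCard ε) := sigmaW_max_pos ε
    have hσ' : sigmaW ε (maxForestCard ε) ≠ 0 := ne_of_gt hσ
    rw [Matrix.isUnit_iff_isUnit_det, isUnit_iff_ne_zero]
    intro hdet
    obtain ⟨v, hv, hv0⟩ := Matrix.exists_mulVec_eq_zero_iff.mpr hdet
    set c : ℝ := α * (sigmaW ε (maxForestCard ε))⁻¹ with hc
    have hcne : c ≠ 0 := mul_ne_zero hα (inv_ne_zero hσ')
    have hexp : kirchhoff ε *ᵥ v + c • (QMat ε (maxForestCard ε) *ᵥ v) = 0 := by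
      rw [← hv0, Matrix.add_mulVec, Jbar, smul_smul, Matrix.smul_mulVec]
    have hQLv : QMat ε (maxForestCard ε) *ᵥ (kirchhoff ε *ᵥ v) = 0 := by
      rw [Matrix.mulVec_mulVec, Qmax_mul_L hnonneg hdiag, Matrix.zero_mulVec]
    have h1 : (c * sigmaW ε (maxForestCard ε)) • (QMat ε (maxForestCard ε) *ᵥ v) = 0 := by
      have h2 := congrArg (fun w => QMat ε (maxForestCard ε) *ᵥ w) hexp
      simp only [Matrix.mulVec_add, Matrix.mulVec_smul, Matrix.mulVec_zero, hQLv,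
        zero_add] at h2
      rw [Matrix.mulVec_mulVec, Qmax_idem hnonneg hdiag, Matrix.smul_mulVec,
        smul_smul] at h2
      exact h2
    have hQv : QMat ε (maxForestCard ε) *ᵥ v = 0 := by
      rcases smul_eq_zero.mp h1 with h | h
      · exact absurd h (mul_ne_zero hcne hσ')
      · exact h
    have hLv : kirchhoff ε *ᵥ v = 0 := by
      rw [hQv, smul_zero, add_zero] at hexp
      exact hexp
    have hfix := Qmax_fix hnonneg hdiag hLv
    rw [hQv] at hfix
    rcases smul_eq_zero.mp hfix.symm with h | h
    · exact absurd h hσ'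
    · exact hv h
  exact ⟨main, by simpa using main 1 one_ne_zero⟩
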